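/- For any prime p, positive integer a, and positive integer n with p not dividing n, the polynomial congruence (-x)^n · ∑_{k=1}^{p^a-1} B_k(x)/(-n)^k ≡ -∑_{r=1}^{a} x^{p^r} · ∑_{k=0}^{n-1} ((n-1)!/k!)·(-x)^k holds modulo p·Z_p[x]. -/

import Mathlib

/-- Stirling numbers of the second kind. -/
def stirling2 : ℕ → ℕ → ℕ
  | 0, 0 => 1
  | 0, _ + 1 => 0
  | _ + 1, 0 => 0
  | n + 1, k + 1 => (k + 1) * stirling2 n (k + 1) + stirling2 n k

/-- The Bell polynomial `B_n(x) = ∑_{k=0}^n S(n,k) x^k`. -/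
noncomputable def bellPoly (R : Type*) [CommRing R] (n : ℕ) : Polynomial R :=
  ∑ k ∈ Finset.range (n + 1), Polynomial.C (stirling2 n k : R) * Polynomial.X ^ k

/-!
Over `𝔽_p` write `T f = x (f + f')`, so that `B_{k+1} = T B_k`. The explicit formula
`l! S(m, l) = ∑_j (-1)^(l-j) C(l, j) j^m` and Fermat give `p ∣ S(p, l)` for `1 < l < p`, hence
`B_p = x + x^p`; since `T` commutes with multiplication by `x^p`, this is Touchard's congruence
`B_{k+p} = B_{k+1} + x^p B_k`. Raising it to `p^a`-th powers with the Frobenius gives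
`B_{k+p^a} = B_{k+1} + W B_k` with `W = ∑_{r=1}^a x^(p^r)`, in particular `B_{p^a} = x + W`.

With `v = (-n)⁻¹` the sum `G = ∑_{k=1}^{p^a-1} v^k B_k` telescopes to
`T G + n G = v^(p^a-1) B_{p^a} - x = W`, so `T ((-x)^n G) = (-x)^n W`. On the other side `W' = 0`
and `D = ∑_{k<n} (n-1)!/k! (-x)^k` satisfies `D + D' = (-x)^(n-1)`, so `T (-W D) = (-x)^n W` too.
Since `T` is injective (look at the leading coefficient), `(-x)^n G = -W D` over `𝔽_p`.
-/

open Polynomial Finset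

theorem stirling2_eq_stirlingSecond : stirling2 = Nat.stirlingSecond := by
  funext n k
  induction n generalizing k with
  | zero => cases k <;> rfl
  | succ n ih => cases k <;> simp [stirling2, Nat.stirlingSecond_succ_succ, ih]

section Ring

variable {R : Type*} [CommRing R]

theorem coeff_bellPoly (n l : ℕ) : (bellPoly R n).coeff l = stirling2 n l := by
  rw [bellPoly, finsetSum_coeff]
  simp only [coeff_C_mul_X_pow]
  rw [Finset.sum_ite_eq, stirling2_eq_stirlingSecond]
  split_ifs with h
  · rfl
  · rw [Nat.stirlingSecond_eq_zero_of_lt (by simpa using h), Nat.cast_zero]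

theorem bellPoly_map {S : Type*} [CommRing S] (f : R →+* S) (n : ℕ) :
    (bellPoly R n).map f = bellPoly S n := by
  ext l
  simp [coeff_bellPoly]

noncomputable def bellStep : R[X] →ₗ[R] R[X] :=
  LinearMap.mulLeft R X ∘ₗ (LinearMap.id + derivative)

@[simp]
theorem bellStep_apply (f : R[X]) : bellStep f = X * (f + derivative f) := rfl

theorem bellStep_injective : Function.Injective (bellStep (R := R)) := by
  refine (injective_iff_map_eq_zero _).2 fun f hf => ?_
  have h := congrArg (coeff · (f.natDegree + 1)) hf
  simp only [bellStep_apply, coeff_X_mul, coeff_add, coeff_derivative,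
    coeff_natDegree_succ_eq_zero, zero_mul, add_zero, coeff_zero] at h
  exact leadingCoeff_eq_zero.1 h

theorem bellPoly_zero : bellPoly R 0 = 1 := by
  simp [bellPoly, stirling2]

theorem bellPoly_succ (n : ℕ) : bellPoly R (n + 1) = bellStep (bellPoly R n) := by
  ext (_ | l)
  · simp [coeff_bellPoly, stirling2]
  · simp only [bellStep_apply, coeff_X_mul, coeff_add, coeff_derivative, coeff_bellPoly,
      stirling2]
    push_cast
    ring

theorem bellPoly_one : bellPoly R 1 = X := by
  simp [bellPoly_succ, bellPoly_zero]

theorem bellStep_mul_of_derivative_eq_zero {w : R[X]} (hw : derivative w = 0) (f : R[X]) :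
    bellStep (w * f) = w * bellStep f := by
  simp only [bellStep_apply, derivative_mul, hw]
  ring

theorem bellStep_neg_X_pow_mul (n : ℕ) (f : R[X]) :
    bellStep ((-X) ^ n * f) = (-X) ^ n * (bellStep f + C (n : R) * f) := by
  cases n with
  | zero => simp
  | succ n =>
    simp only [bellStep_apply, derivative_mul, derivative_pow_succ, derivative_neg, derivative_X,
      map_add, map_one, map_natCast]
    push_cast
    ring

theorem sum_factorial_div_mul_neg_X_pow_succ (m : ℕ) :
    ∑ k ∈ range (m + 2), C (((m + 1).factorial / k.factorial : ℕ) : R) * (-X) ^ k =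
      C ((m + 1 : ℕ) : R) * ∑ k ∈ range (m + 1), C ((m.factorial / k.factorial : ℕ) : R) * (-X) ^ k
        + (-X) ^ (m + 1) := by
  rw [sum_range_succ, Nat.div_self (Nat.factorial_pos _), mul_sum]
  congr 1
  · refine sum_congr rfl fun k hk => ?_
    rw [Nat.factorial_succ, Nat.mul_div_assoc _
      (Nat.factorial_dvd_factorial (Nat.lt_succ_iff.1 (mem_range.1 hk)))]
    simp [mul_assoc]
  · simp

theorem sum_factorial_div_mul_neg_X_pow_add_derivative (m : ℕ) :
    (∑ k ∈ range (m + 1), C ((m.factorial / k.factorial : ℕ) : R) * (-X) ^ k) +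
        derivative (∑ k ∈ range (m + 1), C ((m.factorial / k.factorial : ℕ) : R) * (-X) ^ k) =
      (-X) ^ m := by
  induction m with
  | zero => simp
  | succ m ih =>
    rw [sum_factorial_div_mul_neg_X_pow_succ, derivative_add, derivative_C_mul,
      derivative_pow_succ, derivative_neg, derivative_X]
    push_cast
    linear_combination C ((m : R) + 1) * ih

theorem bellStep_sum_factorial_div_mul_neg_X_pow (m : ℕ) :
    bellStep (∑ k ∈ range (m + 1), C ((m.factorial / k.factorial : ℕ) : R) * (-X) ^ k) =
      -(-X) ^ (m + 1) := by
  rw [bellStep_apply, sum_factorial_div_mul_neg_X_pow_add_derivative, pow_succ]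
  ring

theorem sum_neg_one_pow_mul_choose_mul_pow_succ (m k : ℕ) :
    ∑ j ∈ range (k + 2), (-1 : R) ^ (k + 1 - j) * (k + 1).choose j * (j : R) ^ (m + 1) =
      (k + 1) * (∑ j ∈ range (k + 2), (-1) ^ (k + 1 - j) * (k + 1).choose j * (j : R) ^ m
        + ∑ j ∈ range (k + 1), (-1) ^ (k - j) * k.choose j * (j : R) ^ m) := by
  have shift : ∑ j ∈ range (k + 2), (-1 : R) ^ (k + 1 - j) * k.choose j * (j : R) ^ m =
      -∑ j ∈ range (k + 1), (-1) ^ (k - j) * k.choose j * (j : R) ^ m := by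
    rw [sum_range_succ, Nat.choose_succ_self, Nat.cast_zero, mul_zero, zero_mul, add_zero,
      ← sum_neg_distrib]
    refine sum_congr rfl fun j hj => ?_
    rw [Nat.sub_add_comm (Nat.lt_succ_iff.1 (mem_range.1 hj)), pow_succ]
    ring
  rw [← neg_neg (∑ j ∈ range (k + 1), _), ← shift, ← sub_eq_add_neg, mul_sub, mul_sum, mul_sum,
    ← sum_sub_distrib]
  refine sum_congr rfl fun j hj => ?_
  have hj : j ≤ k + 1 := Nat.lt_succ_iff.1 (mem_range.1 hj)
  have h := congrArg (Nat.cast (R := R)) (Nat.choose_mul_succ_eq k j)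
  push_cast [Nat.cast_sub hj] at h
  linear_combination (-1 : R) ^ (k + 1 - j) * (j : R) ^ m * h

theorem factorial_mul_stirling2 (m l : ℕ) :
    (l.factorial : R) * stirling2 m l =
      ∑ j ∈ range (l + 1), (-1) ^ (l - j) * l.choose j * (j : R) ^ m := by
  induction m generalizing l with
  | zero =>
    have h := add_pow (1 : R) (-1) l
    simp only [one_pow, one_mul, add_neg_cancel] at h
    simp only [pow_zero, mul_one, ← h]
    cases l <;> simp [stirling2]
  | succ m ih =>
    cases l with
    | zero => simp [stirling2]
    | succ k =>
      rw [sum_neg_one_pow_mul_choose_mul_pow_succ, ← ih, ← ih, stirling2, Nat.factorial_succ]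
      push_cast
      ring

noncomputable def seqShift : Module.End R[X] (ℕ → R[X]) := LinearMap.funLeft R[X] R[X] Nat.succ

theorem seqShift_apply (s : ℕ → R[X]) (k : ℕ) : seqShift s k = s (k + 1) := rfl

theorem seqShift_pow_apply (s : ℕ → R[X]) (j k : ℕ) : (seqShift ^ j) s k = s (k + j) := by
  rw [Module.End.pow_apply]
  induction j generalizing s with
  | zero => rfl
  | succ j ih => exact (Function.iterate_succ_apply _ _ _).symm ▸ ih _

theorem aeval_seqShift_apply (j : ℕ) (w : R[X]) (s : ℕ → R[X]) (k : ℕ) :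
    aeval seqShift (X ^ j - X - C w : R[X][X]) s k = s (k + j) - s (k + 1) - w * s k := by
  simp only [map_sub, aeval_X_pow, aeval_X, aeval_C, LinearMap.sub_apply, Pi.sub_apply,
    seqShift_pow_apply, Module.algebraMap_end_apply, Pi.smul_apply, smul_eq_mul, seqShift_apply]

end Ring

section CharP

variable {R : Type*} [CommRing R] (p : ℕ)

theorem derivative_sum_X_pow_prime_pow [CharP R p] (a : ℕ) :
    derivative (∑ r ∈ Icc 1 a, X ^ p ^ r : R[X]) = 0 := by
  rw [derivative_sum]
  refine sum_eq_zero fun r hr => ?_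
  rw [derivative_X_pow, Nat.cast_pow, CharP.cast_eq_zero,
    zero_pow (Nat.one_le_iff_ne_zero.1 (mem_Icc.1 hr).1), map_zero, zero_mul]

variable [Fact p.Prime]

theorem stirling2_prime_of_lt {l : ℕ} (hl : l < p) :
    (stirling2 p l : ZMod p) = stirling2 1 l := by
  have hfac : (l.factorial : ZMod p) ≠ 0 := by
    rw [Ne, ZMod.natCast_eq_zero_iff, (Fact.out : p.Prime).dvd_factorial]
    omega
  refine mul_left_cancel₀ hfac ?_
  simp only [factorial_mul_stirling2, ZMod.pow_card, pow_one]

theorem bellPoly_zmod_prime : bellPoly (ZMod p) p = X + X ^ p := by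
  have hp := (Fact.out : p.Prime).one_lt
  ext l
  simp only [coeff_bellPoly, coeff_add, coeff_X, coeff_X_pow]
  rcases lt_trichotomy l p with hl | rfl | hl
  · rw [stirling2_prime_of_lt p hl, if_neg hl.ne]
    rcases l with _ | _ | l <;> simp [stirling2]
  · simp [stirling2_eq_stirlingSecond, Nat.stirlingSecond_self, hp.ne]
  · simp [stirling2_eq_stirlingSecond, Nat.stirlingSecond_eq_zero_of_lt hl, hl.ne',
      (hp.trans hl).ne]

variable [CharP R p]

theorem bellPoly_prime : bellPoly R p = X + X ^ p := by
  simpa [bellPoly_map] using congrArg (map (ZMod.castHom (dvd_refl p) R)) (bellPoly_zmod_prime p)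

theorem bellPoly_add_prime (k : ℕ) :
    bellPoly R (k + p) = bellPoly R (k + 1) + X ^ p * bellPoly R k := by
  have hXp : derivative (X ^ p : R[X]) = 0 := by
    rw [derivative_X_pow, CharP.cast_eq_zero, map_zero, zero_mul]
  induction k with
  | zero => rw [zero_add, bellPoly_prime, bellPoly_one, bellPoly_zero, mul_one]
  | succ k ih =>
    rw [Nat.add_right_comm, bellPoly_succ, ih, map_add, bellStep_mul_of_derivative_eq_zero hXp,
      ← bellPoly_succ, ← bellPoly_succ]

theorem dvd_X_pow_prime_pow_sub_X_sub_C_sum (a : ℕ) :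
    (X ^ p - X - C (X ^ p) : R[X][X]) ∣ X ^ p ^ a - X - C (∑ r ∈ Icc 1 a, X ^ p ^ r) := by
  induction a with
  | zero => simp
  | succ a ih =>
    have h : (X ^ p ^ (a + 1) - X - C (∑ r ∈ Icc 1 (a + 1), X ^ p ^ r) : R[X][X]) =
        (X ^ p ^ a - X - C (∑ r ∈ Icc 1 a, X ^ p ^ r)) + (X ^ p - X - C (X ^ p)) ^ p ^ a := by
      rw [sub_pow_char_pow, sub_pow_char_pow, sum_Icc_succ_top (by omega)]
      simp only [← map_pow, ← pow_mul, ← pow_succ', map_add]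
      ring
    rw [h]
    exact dvd_add ih (dvd_pow_self _ (pow_ne_zero _ (Fact.out : p.Prime).ne_zero))

theorem bellPoly_add_prime_pow (a k : ℕ) :
    bellPoly R (k + p ^ a) = bellPoly R (k + 1) + (∑ r ∈ Icc 1 a, X ^ p ^ r) * bellPoly R k := by
  -- Touchard's congruence says that `Y ^ p - Y - x ^ p`, evaluated at the shift `Y`, kills the
  -- Bell sequence; so does every multiple of it.
  have hb : aeval seqShift (X ^ p - X - C (X ^ p) : R[X][X]) (bellPoly R) = 0 := by
    ext1 j
    rw [aeval_seqShift_apply, bellPoly_add_prime, Pi.zero_apply]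
    ring
  obtain ⟨q, hq⟩ := dvd_X_pow_prime_pow_sub_X_sub_C_sum (R := R) p a
  have h : aeval seqShift (X ^ p ^ a - X - C (∑ r ∈ Icc 1 a, X ^ p ^ r) : R[X][X])
      (bellPoly R) = 0 := by
    rw [hq, mul_comm, map_mul, Module.End.mul_apply, hb, map_zero]
  have hk := congrFun h k
  rw [aeval_seqShift_apply, Pi.zero_apply] at hk
  linear_combination hk

end CharP

theorem bellStep_add_C_mul_sum_bellPoly {R : Type*} [CommRing R] {c v : R} (hcv : c * v = -1)
    (N : ℕ) :
    bellStep (∑ k ∈ Icc 1 N, C (v ^ k) * bellPoly R k)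
        + C c * ∑ k ∈ Icc 1 N, C (v ^ k) * bellPoly R k =
      C (v ^ N) * bellPoly R (N + 1) - X := by
  induction N with
  | zero => simp [bellPoly_one]
  | succ N ih =>
    have hv : C c * C (v ^ (N + 1)) = -C (v ^ N) := by
      rw [← map_mul, ← map_neg, pow_succ]
      congr 1
      linear_combination v ^ N * hcv
    rw [sum_Icc_succ_top (by omega), map_add, bellStep_mul_of_derivative_eq_zero (derivative_C),
      ← bellPoly_succ]
    linear_combination ih + bellPoly R (N + 1) * hv

theorem neg_X_pow_mul_sum_bellPoly_zmod (p : ℕ) [Fact p.Prime] (a n : ℕ)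
    (hn : (n : ZMod p) ≠ 0) :
    (-X) ^ n * (∑ k ∈ Icc 1 (p ^ a - 1), C (((-(n : ZMod p)) ^ k)⁻¹) * bellPoly (ZMod p) k) =
      -(∑ r ∈ Icc 1 a, X ^ (p ^ r) *
        ∑ k ∈ range n, C (((n - 1).factorial / k.factorial : ℕ) : ZMod p) * (-X) ^ k) := by
  obtain ⟨m, rfl⟩ : ∃ m, n = m + 1 := Nat.exists_eq_succ_of_ne_zero (by rintro rfl; simp at hn)
  set v : ZMod p := (-((m + 1 : ℕ) : ZMod p))⁻¹ with hv_def
  have hv : v ≠ 0 := inv_ne_zero (neg_ne_zero.2 hn)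
  have hnv : ((m + 1 : ℕ) : ZMod p) * v = -1 := by
    rw [hv_def, inv_neg, mul_neg, mul_inv_cancel₀ hn]
  have hpa : p ^ a - 1 + 1 = p ^ a :=
    Nat.sub_add_cancel (Nat.one_le_pow _ _ (Fact.out : p.Prime).pos)
  have hvpa : v ^ (p ^ a - 1) = 1 := by
    refine mul_right_cancel₀ hv ?_
    rw [← pow_succ, hpa, ZMod.pow_card_pow, one_mul]
  have hG := bellStep_add_C_mul_sum_bellPoly hnv (p ^ a - 1)
  have hB : bellPoly (ZMod p) (p ^ a) = X + ∑ r ∈ Icc 1 a, X ^ p ^ r := by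
    simpa [bellPoly_one, bellPoly_zero] using bellPoly_add_prime_pow (R := ZMod p) p a 0
  rw [hvpa, map_one, one_mul, hpa, hB, add_sub_cancel_left] at hG
  simp only [v, inv_pow] at hG
  rw [Nat.add_sub_cancel, ← sum_mul]
  apply bellStep_injective
  rw [bellStep_neg_X_pow_mul, hG, map_neg,
    bellStep_mul_of_derivative_eq_zero (derivative_sum_X_pow_prime_pow p a),
    bellStep_sum_factorial_div_mul_neg_X_pow]
  ring

theorem PadicInt.toZMod_ringInverse {p : ℕ} [Fact p.Prime] (x : ℤ_[p]) :
    PadicInt.toZMod (Ring.inverse x) = (PadicInt.toZMod x)⁻¹ := by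
  by_cases hx : IsUnit x
  · obtain ⟨u, rfl⟩ := hx
    rw [Ring.inverse_unit, map_units_inv]
  · have : x ∈ RingHom.ker PadicInt.toZMod := by
      rwa [PadicInt.ker_toZMod, IsLocalRing.mem_maximalIdeal, mem_nonunits_iff]
    rw [Ring.inverse_non_unit x hx, map_zero, RingHom.mem_ker.1 this, inv_zero]

theorem PadicInt.natCast_dvd_iff_map_toZMod_eq_zero {p : ℕ} [Fact p.Prime] (f : ℤ_[p][X]) :
    (p : ℤ_[p][X]) ∣ f ↔ f.map PadicInt.toZMod = 0 := by
  rw [← map_natCast C, C_dvd_iff_dvd_coeff, Polynomial.ext_iff]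
  refine forall_congr' fun i => ?_
  rw [coeff_map, coeff_zero, ← Ideal.mem_span_singleton, ← PadicInt.maximalIdeal_eq_span_p,
    ← PadicInt.ker_toZMod, RingHom.mem_ker]

open Polynomial in
theorem sun_zagier_extension_poly_general (p : ℕ) [Fact p.Prime] (a n : ℕ)
    (hpn : ¬ p ∣ n) :
    (p : Polynomial ℤ_[p]) ∣
      (-X) ^ n * (∑ k ∈ Finset.Icc 1 (p ^ a - 1),
          C (Ring.inverse ((-(n : ℤ_[p])) ^ k)) * bellPoly ℤ_[p] k) -
        (-(∑ r ∈ Finset.Icc 1 a, X ^ (p ^ r) *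
            ∑ k ∈ Finset.range n, C (((n - 1).factorial / k.factorial : ℕ) : ℤ_[p]) * (-X) ^ k)) := by
  rw [PadicInt.natCast_dvd_iff_map_toZMod_eq_zero]
  simp only [Polynomial.map_sub, Polynomial.map_mul, Polynomial.map_neg, Polynomial.map_sum,
    Polynomial.map_pow, map_X, map_C, bellPoly_map, PadicInt.toZMod_ringInverse, map_pow, map_neg,
    map_natCast (PadicInt.toZMod (p := p))]
  rw [neg_X_pow_mul_sum_bellPoly_zmod p a n (by rwa [Ne, ZMod.natCast_eq_zero_iff]), sub_self]

open Polynomial in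
/-- For a prime `p` and positive integers `a`, `n` with `p ∤ n`,
`(-x)^n ∑_{k=1}^{p^a-1} B_k(x)/(-n)^k ≡ -∑_{r=1}^a x^{p^r} ∑_{k=0}^{n-1} ((n-1)!/k!)(-x)^k`
modulo `p·ℤ_p[x]`. -/
theorem sun_zagier_extension_poly (p : ℕ) [Fact p.Prime] (a n : ℕ) (ha : 0 < a) (hn : 0 < n)
    (hpn : ¬ p ∣ n) :
    (p : Polynomial ℤ_[p]) ∣
      (-X) ^ n * (∑ k ∈ Finset.Icc 1 (p ^ a - 1),
          C (Ring.inverse ((-(n : ℤ_[p])) ^ k)) * bellPoly ℤ_[p] k) -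
        (-(∑ r ∈ Finset.Icc 1 a, X ^ (p ^ r) *
            ∑ k ∈ Finset.range n, C (((n - 1).factorial / k.factorial : ℕ) : ℤ_[p]) * (-X) ^ k)) :=
  sun_zagier_extension_poly_general p a n hpn
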